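/- arXiv:2601.05797 — 2 statements merged into one kernel-verified Lean document; each statement's English description precedes it below -/
import Mathlib

section
/- Let S be a K-algebra with pseudo-degree function χ. If a ∈ N(S) satisfies χ(a) = m > 0 and C_S(a) satisfies condition D(1), then C_S(a) is a free K[a]-module with a finite basis whose cardinality divides m. -/
/-- A pseudo-degree function on a (not necessarily associative) algebra `S`. -/
def IsPseudoDegree {S : Type*} [NonAssocRing S] (χ : S → WithBot ℤ) : Prop :=
  (∀ a : S, χ a = ⊥ ↔ a = 0) ∧
  (∀ a b : S, χ (a * b) = χ a + χ b) ∧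
  (∀ a b : S, χ (a + b) ≤ max (χ a) (χ b))

/-- The nucleus of `S`. -/
def nucleus (S : Type*) [NonAssocRing S] : Set S :=
  {a | (∀ b c : S, a * (b * c) = (a * b) * c) ∧
       (∀ b c : S, (b * a) * c = b * (a * c)) ∧
       (∀ b c : S, (b * c) * a = b * (c * a))}

/-- The centralizer of `a` in `S`. -/
def centralizer {S : Type*} [NonAssocRing S] (a : S) : Set S :=
  {b | a * b = b * a}

/-- Condition `D(ℓ)` for a subset `B` of `S` with respect to a pseudo-degree function
`χ`: every nonzero element of `B` has `χ`-value `≥ 0`, and whenever `ℓ + 1` elements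
of `B` are all mapped to the same integer by `χ`, some nontrivial `K`-linear
combination of them has strictly smaller `χ`-value. -/
def CondD (K : Type*) {S : Type*} [Field K] [NonAssocRing S] [Module K S]
    (χ : S → WithBot ℤ) (B : Set S) (ℓ : ℕ) : Prop :=
  (∀ b ∈ B, b ≠ 0 → 0 ≤ χ b) ∧
  ∀ (f : Fin (ℓ + 1) → S) (n : ℤ), (∀ i, f i ∈ B) →
    (∀ i, χ (f i) = (n : WithBot ℤ)) →
    ∃ c : Fin (ℓ + 1) → K, (∃ i, c i ≠ 0) ∧
      χ (∑ i, c i • f i) < (n : WithBot ℤ)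

/-- Powers of an element of a non-associative unital ring. -/
def apow {S : Type*} [NonAssocRing S] (a : S) : ℕ → S
  | 0 => 1
  | n + 1 => a * apow a n

/-- Evaluation of a polynomial `p ∈ K[x]` at an element `a` of a non-associative
`K`-algebra; for `a` in the nucleus this is the usual evaluation in `K[a]`. -/
noncomputable def evalAt {K S : Type*} [Field K] [NonAssocRing S] [Module K S]
    (a : S) (p : Polynomial K) : S :=
  p.sum fun i c => c • apow a i

/-!
The nonzero elements of `C = C_S(a)` have degrees in `ℕ`, and `C` is closed under multiplication
because `a` lies in the nucleus, so these degrees form a submonoid of `ℕ`. Their residues mod `m`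
then form a submonoid, hence a subgroup, of `ZMod m`, whose order `k` divides `m`. Choose in each
of these residue classes an element `b_r` of `C` of least degree. Multiplying by `a` raises the
degree by `m`, so the nonzero summands of `∑ φ_r(a) b_r` have degrees in distinct classes and
cannot cancel; this gives uniqueness. For existence, an element `c` of degree `n` has the same
degree as some `a^j b_r`, and `D(1)` provides `γ` such that `c - γ a^j b_r` has smaller degree,
so induction on the degree applies.
-/

open Polynomial

namespace IsPseudoDegree

variable {S : Type*} [NonAssocRing S] {χ : S → WithBot ℤ} (hχ : IsPseudoDegree χ)
include hχ

theorem map_eq_bot_iff {x : S} : χ x = ⊥ ↔ x = 0 := hχ.1 x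

theorem map_mul (x y : S) : χ (x * y) = χ x + χ y := hχ.2.1 x y

theorem map_add_le (x y : S) : χ (x + y) ≤ max (χ x) (χ y) := hχ.2.2 x y

theorem map_zero : χ 0 = ⊥ := hχ.map_eq_bot_iff.mpr rfl

theorem map_ne_bot {x : S} (hx : x ≠ 0) : χ x ≠ ⊥ := hχ.map_eq_bot_iff.not.mpr hx

theorem nontrivial_of_map_eq_coe {x : S} {n : ℤ} (h : χ x = n) : Nontrivial S :=
  nontrivial_of_ne x 0 fun h0 => by simp [h0, hχ.map_zero] at h

theorem map_one [Nontrivial S] : χ 1 = 0 := by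
  obtain ⟨n, hn⟩ := WithBot.ne_bot_iff_exists.mp (hχ.map_ne_bot one_ne_zero)
  have h := hχ.map_mul 1 1
  rw [mul_one] at h
  rw [← hn] at h ⊢
  norm_cast at h ⊢
  omega

theorem map_neg (x : S) : χ (-x) = χ x := by
  cases subsingleton_or_nontrivial S
  · rw [Subsingleton.elim (-x) x]
  have hsq := hχ.map_mul (-1) (-1)
  rw [neg_mul_neg, mul_one, hχ.map_one] at hsq
  have hn1 : χ (-1 : S) = 0 := by
    obtain ⟨n, hn⟩ := WithBot.ne_bot_iff_exists.mp (hχ.map_ne_bot (neg_ne_zero.mpr one_ne_zero))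
    rw [← hn] at hsq ⊢
    norm_cast at hsq ⊢
    omega
  rw [← neg_one_mul, hχ.map_mul, hn1, zero_add]

theorem map_add_of_lt {x y : S} (h : χ x < χ y) : χ (x + y) = χ y := by
  refine le_antisymm ((hχ.map_add_le x y).trans (max_le h.le le_rfl)) (not_lt.mp fun hlt => ?_)
  have := hχ.map_add_le (x + y) (-x)
  rw [add_neg_cancel_comm, hχ.map_neg] at this
  exact this.not_gt (max_lt hlt h)

theorem map_sum_eq_sup {ι : Type*} (s : Finset ι) (f : ι → S)
    (hf : ∀ i ∈ s, ∀ j ∈ s, i ≠ j → χ (f i) = χ (f j) → f i = 0) :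
    χ (∑ i ∈ s, f i) = s.sup fun i => χ (f i) := by
  classical
  induction s using Finset.induction_on with
  | empty => simp [hχ.map_zero]
  | insert i s hi ih =>
    have IH := ih fun x hx y hy hxy => hf x (by simp [hx]) y (by simp [hy]) hxy
    rw [Finset.sum_insert hi, Finset.sup_insert, ← IH]
    rcases lt_trichotomy (χ (f i)) (χ (∑ j ∈ s, f j)) with hlt | heq | hgt
    · rw [hχ.map_add_of_lt hlt, max_eq_right hlt.le]
    · by_cases hfi : f i = 0
      · rw [hfi, zero_add, hχ.map_zero, max_eq_right bot_le]
      have hs : s.Nonempty := Finset.nonempty_iff_ne_empty.mpr fun hs =>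
        hχ.map_ne_bot hfi (by simpa [hs, hχ.map_zero] using heq)
      obtain ⟨j, hj, hjM⟩ := Finset.exists_mem_eq_sup s hs fun i => χ (f i)
      exact absurd (hf i (by simp) j (by simp [hj]) (by rintro rfl; exact hi hj)
        (by rw [heq, IH, hjM])) hfi
    · rw [add_comm, hχ.map_add_of_lt hgt, max_eq_left hgt.le]

end IsPseudoDegree

section Centralizer

variable {S : Type*} [NonAssocRing S]

theorem one_mem_centralizer (a : S) : (1 : S) ∈ centralizer a := by
  simp [centralizer]

theorem mul_mem_centralizer {a x y : S} (ha : a ∈ nucleus S) (hx : x ∈ centralizer a)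
    (hy : y ∈ centralizer a) : x * y ∈ centralizer a := by
  obtain ⟨h₁, h₂, h₃⟩ := ha
  change a * (x * y) = x * y * a
  rw [h₁, hx, h₂, hy, ← h₃]

theorem apow_mem_centralizer {a : S} (ha : a ∈ nucleus S) (n : ℕ) :
    apow a n ∈ centralizer a := by
  induction n with
  | zero => exact one_mem_centralizer a
  | succ n ih => exact mul_mem_centralizer ha rfl ih

variable (K : Type*) [Field K] [Module K S] [SMulCommClass K S S] [IsScalarTower K S S]

def centralizerSubmodule (a : S) : Submodule K S where
  carrier := centralizer a
  zero_mem' := by simp [centralizer]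
  add_mem' {x y} (hx : a * x = x * a) (hy : a * y = y * a) := by
    change a * (x + y) = (x + y) * a
    rw [mul_add, add_mul, hx, hy]
  smul_mem' γ x (hx : a * x = x * a) := by
    change a * (γ • x) = (γ • x) * a
    rw [mul_smul_comm, smul_mul_assoc, hx]

end Centralizer

section Scalars

variable {K S : Type*} [Field K] [NonAssocRing S] [Module K S] [IsScalarTower K S S]
  {χ : S → WithBot ℤ}

theorem IsPseudoDegree.map_smul (hχ : IsPseudoDegree χ)
    (hK : ∀ γ : K, γ ≠ 0 → 0 ≤ χ (γ • (1 : S))) {γ : K} (hγ : γ ≠ 0) (x : S) :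
    χ (γ • x) = χ x := by
  have : Nontrivial S :=
    nontrivial_of_ne (γ • (1 : S)) 0 fun h => by simpa [h, hχ.map_zero] using hK γ hγ
  have hinv : χ (γ • (1 : S)) + χ (γ⁻¹ • (1 : S)) = 0 := by
    rw [← hχ.map_mul, smul_mul_assoc, one_mul, smul_smul, mul_inv_cancel₀ hγ, one_smul,
      hχ.map_one]
  have hunit : χ (γ • (1 : S)) = 0 :=
    ((add_eq_zero_iff_of_nonneg (hK γ hγ) (hK γ⁻¹ (inv_ne_zero hγ))).mp hinv).1
  rw [← one_mul x, ← smul_mul_assoc, hχ.map_mul, hunit, zero_add, one_mul]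

end Scalars

section Evaluation

variable {K S : Type*} [Field K] [NonAssocRing S] [Module K S]

theorem evalAt_monomial (a : S) (n : ℕ) (γ : K) : evalAt a (monomial n γ) = γ • apow a n := by
  simp [evalAt, sum_monomial_index]

variable (K) in
noncomputable def evalAtLinear (a : S) : K[X] →ₗ[K] S :=
  lsum fun n => LinearMap.toSpanSingleton K S (apow a n)

theorem evalAtLinear_apply (a : S) (p : K[X]) : evalAtLinear K a p = evalAt a p := rfl

variable [IsScalarTower K S S] {χ : S → WithBot ℤ} (hχ : IsPseudoDegree χ) {a : S} {m : ℕ}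
include hχ

theorem IsPseudoDegree.map_apow [Nontrivial S] (hm : χ a = (m : ℤ)) (n : ℕ) :
    χ (apow a n) = ((n * m : ℕ) : ℤ) := by
  induction n with
  | zero => simpa [apow] using hχ.map_one
  | succ n ih =>
    rw [apow, hχ.map_mul, hm, ih, ← WithBot.coe_add, WithBot.coe_inj]
    push_cast
    ring

theorem IsPseudoDegree.map_evalAt (hK : ∀ γ : K, γ ≠ 0 → 0 ≤ χ (γ • (1 : S)))
    (hm : χ a = (m : ℤ)) (hmpos : 0 < m) {p : K[X]} (hp : p ≠ 0) :
    χ (evalAt a p) = ((p.natDegree * m : ℕ) : ℤ) := by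
  have := hχ.nontrivial_of_map_eq_coe hm
  have hterm : ∀ i ∈ p.support, χ (p.coeff i • apow a i) = ((i * m : ℕ) : ℤ) := fun i hi => by
    rw [hχ.map_smul hK (mem_support_iff.mp hi), hχ.map_apow hm]
  have hsup : χ (evalAt a p) = p.support.sup fun i => χ (p.coeff i • apow a i) := by
    refine hχ.map_sum_eq_sup _ _ fun i hi j hj hij hχij => absurd ?_ hij
    rw [hterm i hi, hterm j hj] at hχij
    exact Nat.eq_of_mul_eq_mul_right hmpos (by exact_mod_cast hχij)
  rw [hsup]
  refine le_antisymm (Finset.sup_le fun i hi => ?_) ?_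
  · rw [hterm i hi]
    exact_mod_cast Nat.mul_le_mul_right m (le_natDegree_of_mem_supp i hi)
  · have hdeg := natDegree_mem_support_of_nonzero hp
    rw [← hterm _ hdeg]
    exact Finset.le_sup (f := fun i => χ (p.coeff i • apow a i)) hdeg

end Evaluation

section Combination

variable {K S : Type*} [Field K] [NonAssocRing S] [Module K S] [IsScalarTower K S S]
  {ι : Type*} [Fintype ι]

variable (K) in
noncomputable def polyCombination (a : S) (b : ι → S) : (ι → K[X]) →ₗ[K] S :=
  ∑ i, LinearMap.mulRight K (b i) ∘ₗ evalAtLinear K a ∘ₗ LinearMap.proj i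

theorem polyCombination_apply (a : S) (b : ι → S) (φ : ι → K[X]) :
    polyCombination K a b φ = ∑ i, evalAt a (φ i) * b i := by
  simp [polyCombination, evalAtLinear_apply]

theorem polyCombination_single [DecidableEq ι] (a : S) (b : ι → S) (i : ι) (n : ℕ) (γ : K) :
    polyCombination K a b (Pi.single i (monomial n γ)) = γ • (apow a n * b i) := by
  rw [polyCombination_apply, Finset.sum_eq_single i (fun j _ hj => by
      rw [Pi.single_eq_of_ne hj, ← evalAtLinear_apply, map_zero, zero_mul])
    (fun h => absurd (Finset.mem_univ i) h), Pi.single_eq_same, evalAt_monomial, smul_mul_assoc]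

end Combination

section CondD

variable {K S : Type*} [Field K] [NonAssocRing S] [Module K S] {χ : S → WithBot ℤ}

theorem CondD.smul_one_nonneg [SMulCommClass K S S] [IsScalarTower K S S] [Nontrivial S]
    {a : S} (hD : CondD K χ (centralizer a) 1) (γ : K) (hγ : γ ≠ 0) : 0 ≤ χ (γ • (1 : S)) :=
  hD.1 _ ((centralizerSubmodule K a).smul_mem γ (one_mem_centralizer a))
    (smul_ne_zero hγ one_ne_zero)

theorem CondD.exists_sub_smul_lt [IsScalarTower K S S] {B : Set S} (hD : CondD K χ B 1)
    (hχ : IsPseudoDegree χ) (hK : ∀ γ : K, γ ≠ 0 → 0 ≤ χ (γ • (1 : S)))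
    {x y : S} (hx : x ∈ B) (hy : y ∈ B) {n : ℤ} (hxn : χ x = n) (hyn : χ y = n) :
    ∃ γ : K, χ (x - γ • y) < n := by
  obtain ⟨c, ⟨i, hi⟩, hlt⟩ :=
    hD.2 ![x, y] n (Fin.forall_fin_two.mpr ⟨hx, hy⟩) (Fin.forall_fin_two.mpr ⟨hxn, hyn⟩)
  rw [Fin.sum_univ_two] at hlt
  simp only [Matrix.cons_val_zero, Matrix.cons_val_one] at hlt
  have hc₀ : c 0 ≠ 0 := by
    intro h₀
    have hc₁ : c 1 ≠ 0 := by fin_cases i <;> simp_all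
    rw [h₀, zero_smul, zero_add, hχ.map_smul hK hc₁, hyn] at hlt
    exact lt_irrefl _ hlt
  refine ⟨-((c 0)⁻¹ * c 1), ?_⟩
  have hrescale : x - (-((c 0)⁻¹ * c 1)) • y = (c 0)⁻¹ • (c 0 • x + c 1 • y) := by
    rw [smul_add, smul_smul, smul_smul, inv_mul_cancel₀ hc₀, one_smul]
    module
  rw [hrescale, hχ.map_smul hK (inv_ne_zero hc₀)]
  exact hlt

end CondD

section Basis

variable {K S : Type*} [Field K] [NonAssocRing S] [Module K S] [IsScalarTower K S S]
  {χ : S → WithBot ℤ} (hχ : IsPseudoDegree χ) {a : S} {m : ℕ}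
  (hm : χ a = (m : ℤ)) {ι : Type*} [Fintype ι] {b : ι → S} {d : ι → ℕ}
  (hbd : ∀ i, χ (b i) = (d i : ℤ))
include hχ hm hbd

theorem polyCombination_injective (hK : ∀ γ : K, γ ≠ 0 → 0 ≤ χ (γ • (1 : S))) (hmpos : 0 < m)
    (hd : Function.Injective fun i => (d i : ZMod m)) :
    Function.Injective (polyCombination K a b) := by
  refine (injective_iff_map_eq_zero _).mpr fun φ hφ => funext fun i => by_contra fun hi => ?_
  have hval : ∀ i, φ i ≠ 0 →
      χ (evalAt a (φ i) * b i) = (((φ i).natDegree * m + d i : ℕ) : ℤ) := fun i hi => by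
    rw [hχ.map_mul, hχ.map_evalAt hK hm hmpos hi, hbd, ← WithBot.coe_add]
    push_cast; rfl
  have hzero : ∀ i, φ i = 0 → evalAt a (φ i) * b i = 0 := fun i hi => by
    rw [hi, ← evalAtLinear_apply, map_zero, zero_mul]
  have hsup := hχ.map_sum_eq_sup Finset.univ (fun i => evalAt a (φ i) * b i)
    fun i _ j _ hij heq => by_contra fun hne => by
      have hφi : φ i ≠ 0 := fun h => hne (hzero i h)
      have hφj : φ j ≠ 0 := fun h => hχ.map_ne_bot hne (by rw [heq, hzero j h, hχ.map_zero])
      rw [hval i hφi, hval j hφj, WithBot.coe_inj, Nat.cast_inj] at heq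
      exact hij (hd (by simpa using congrArg (Nat.cast : ℕ → ZMod m) heq))
  rw [← polyCombination_apply, hφ, hχ.map_zero, eq_comm, Finset.sup_eq_bot_iff] at hsup
  exact WithBot.coe_ne_bot ((hval i hi).symm.trans (hsup i (Finset.mem_univ i)))

theorem mem_range_polyCombination [SMulCommClass K S S] (ha : a ∈ nucleus S)
    (hD : CondD K χ (centralizer a) 1) (hb : ∀ i, b i ∈ centralizer a)
    (hcover : ∀ c ∈ centralizer a, c ≠ 0 → ∃ i j, χ c = ((d i + j * m : ℕ) : ℤ))
    {c : S} (hc : c ∈ centralizer a) : c ∈ LinearMap.range (polyCombination K a b) := by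
  classical
  have := hχ.nontrivial_of_map_eq_coe hm
  let C := centralizerSubmodule K a
  suffices key : ∀ n : ℕ, ∀ c ∈ C, c ≠ 0 → χ c = ((n : ℤ) : WithBot ℤ) →
      c ∈ LinearMap.range (polyCombination K a b) by
    by_cases hc0 : c = 0
    · exact hc0 ▸ zero_mem _
    obtain ⟨i, j, hij⟩ := hcover c hc hc0
    exact key _ c hc hc0 hij
  intro n
  induction n using Nat.strong_induction_on with
  | _ n IH =>
  intro c hc hc0 hcn
  obtain ⟨i, j, hij⟩ := hcover c hc hc0
  set y := apow a j * b i
  have hy : y ∈ C := mul_mem_centralizer ha (apow_mem_centralizer ha j) (hb i)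
  have hyn : χ y = ((n : ℤ) : WithBot ℤ) := by
    rw [← hcn, hij, hχ.map_mul, hχ.map_apow hm, hbd, ← WithBot.coe_add, WithBot.coe_inj]
    push_cast; ring
  obtain ⟨γ, hγ⟩ := hD.exists_sub_smul_lt hχ hD.smul_one_nonneg hc hy hcn hyn
  have hrest : c - γ • y ∈ LinearMap.range (polyCombination K a b) := by
    by_cases h0 : c - γ • y = 0
    · exact h0 ▸ zero_mem _
    have hmem : c - γ • y ∈ C := C.sub_mem hc (C.smul_mem γ hy)
    obtain ⟨i', j', h'⟩ := hcover _ hmem h0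
    exact IH _ (by rw [h'] at hγ; exact_mod_cast hγ) _ hmem h0 h'
  rw [← sub_add_cancel c (γ • y)]
  exact add_mem hrest ⟨_, polyCombination_single a b i j γ⟩

end Basis

theorem AddSubmonoid.exists_addSubgroup_coe_eq {G : Type*} [AddGroup G] [Finite G]
    (M : AddSubmonoid G) : ∃ H : AddSubgroup G, (H : Set G) = M :=
  ⟨AddSubgroup.closure M, by
    rw [← AddSubgroup.coe_toAddSubmonoid, AddSubgroup.closure_toAddSubmonoid_of_finite,
      AddSubmonoid.closure_eq]⟩

theorem AddSubmonoid.exists_least_residue_representatives (D : AddSubmonoid ℕ) {m : ℕ}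
    (hm : 0 < m) : ∃ (k : ℕ) (d : Fin k → ℕ), k ∣ m ∧ (∀ i, d i ∈ D) ∧
      Function.Injective (fun i => (d i : ZMod m)) ∧ ∀ n ∈ D, ∃ i j, n = d i + j * m := by
  classical
  have : NeZero m := ⟨hm.ne'⟩
  obtain ⟨H, hH⟩ := (D.map (Nat.castAddMonoidHom (ZMod m))).exists_addSubgroup_coe_eq
  have hex : ∀ r : H, ∃ n, n ∈ D ∧ (n : ZMod m) = r := fun r => by
    obtain ⟨n, hn, h⟩ : (r : ZMod m) ∈ D.map (Nat.castAddMonoidHom (ZMod m)) := by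
      rw [← SetLike.mem_coe, ← hH]; exact r.2
    exact ⟨n, hn, h⟩
  let e := Finite.equivFin H
  refine ⟨Nat.card H, fun i => Nat.find (hex (e.symm i)), ?_,
    fun i => (Nat.find_spec (hex _)).1, fun i i' h => ?_, fun n hn => ?_⟩
  · simpa using H.card_addSubgroup_dvd_card
  · simp only [(Nat.find_spec (hex _)).2] at h
    exact e.symm.injective (Subtype.ext h)
  · have hr : (n : ZMod m) ∈ H := by rw [← SetLike.mem_coe, hH]; exact ⟨n, hn, rfl⟩
    refine ⟨e ⟨n, hr⟩, ?_⟩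
    simp only [Equiv.symm_apply_apply]
    have hle := Nat.find_min' (hex ⟨n, hr⟩) ⟨hn, rfl⟩
    obtain ⟨j, hj⟩ := (Nat.modEq_iff_dvd' hle).mp
      ((ZMod.natCast_eq_natCast_iff _ _ _).mp (Nat.find_spec (hex ⟨n, hr⟩)).2)
    exact ⟨j, by rw [mul_comm j]; omega⟩

theorem WithBot.exists_natCast_eq_of_nonneg {x : WithBot ℤ} (hx : 0 ≤ x) :
    ∃ n : ℕ, x = ((n : ℤ) : WithBot ℤ) := by
  obtain ⟨z, rfl⟩ := WithBot.ne_bot_iff_exists.mp (ne_bot_of_le_ne_bot WithBot.coe_ne_bot hx)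
  lift z to ℕ using by exact_mod_cast hx
  exact ⟨z, rfl⟩

def centralizerDegrees {S : Type*} [NonAssocRing S] [Nontrivial S] {χ : S → WithBot ℤ}
    (hχ : IsPseudoDegree χ) {a : S} (ha : a ∈ nucleus S) : AddSubmonoid ℕ where
  carrier := {n | ∃ c ∈ centralizer a, c ≠ 0 ∧ χ c = ((n : ℤ) : WithBot ℤ)}
  zero_mem' := ⟨1, one_mem_centralizer a, one_ne_zero, by simp [hχ.map_one]⟩
  add_mem' := by
    rintro n₁ n₂ ⟨c₁, hc₁, hc₁0, h₁⟩ ⟨c₂, hc₂, hc₂0, h₂⟩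
    have h : χ (c₁ * c₂) = ((n₁ + n₂ : ℕ) : ℤ) := by
      rw [hχ.map_mul, h₁, h₂, ← WithBot.coe_add]
      push_cast; rfl
    exact ⟨c₁ * c₂, mul_mem_centralizer ha hc₁ hc₂,
      fun h0 => WithBot.coe_ne_bot (h.symm.trans (hχ.map_eq_bot_iff.mpr h0)), h⟩

/-- Let `S` be a `K`-algebra with pseudo-degree function `χ`.  If `a` is in the nucleus
of `S` with `χ a = m > 0` and the centralizer `C_S(a)` satisfies condition `D(1)`,
then `C_S(a)` is a free left `K[a]`-module with a finite basis whose cardinality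
divides `m`. -/
theorem centralizer_free_basis_card_dvd {K S : Type*} [Field K] [NonAssocRing S]
    [Module K S] [SMulCommClass K S S] [IsScalarTower K S S]
    (χ : S → WithBot ℤ) (hχ : IsPseudoDegree χ)
    (a : S) (ha : a ∈ nucleus S) (m : ℕ) (hm : χ a = (m : ℤ)) (hmpos : 0 < m)
    (hD : CondD K χ (centralizer a) 1) :
    ∃ (k : ℕ), k ∣ m ∧ ∃ b : Fin k → S, (∀ i, b i ∈ centralizer a) ∧
      ∀ c ∈ centralizer a,
        ∃! φ : Fin k → Polynomial K, c = ∑ i, evalAt (a := a) (φ i) * b i := by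
  have : Nontrivial S := hχ.nontrivial_of_map_eq_coe hm
  obtain ⟨k, d, hkm, hdD, hdinj, hcover⟩ :=
    (centralizerDegrees hχ ha).exists_least_residue_representatives hmpos
  choose b hb _ hbd using hdD
  have hcover' : ∀ c ∈ centralizer a, c ≠ 0 → ∃ i j, χ c = ((d i + j * m : ℕ) : ℤ) :=
    fun c hc hc0 => by
      obtain ⟨n, hn⟩ := WithBot.exists_natCast_eq_of_nonneg (hD.1 c hc hc0)
      obtain ⟨i, j, rfl⟩ := hcover n ⟨c, hc, hc0, hn⟩
      exact ⟨i, j, hn⟩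
  refine ⟨k, hkm, b, hb, fun c hc => ?_⟩
  obtain ⟨φ, hφ⟩ := mem_range_polyCombination hχ hm hbd ha hD hb hcover' hc
  refine ⟨φ, by rw [← hφ, polyCombination_apply], fun ψ hψ => ?_⟩
  refine polyCombination_injective hχ hm hbd hD.smul_one_nonneg hmpos hdinj ?_
  rw [hφ, polyCombination_apply, ← hψ]
end

section
/- Let a, b be elements of the Ore extension S = 𝕆[y][x;σ,δ] with deg_y(σ(y)) = s > 1, where a has x-degree m > 0 with leading coefficient a_m, and b ≠ 0 has x-degree n with leading coefficient b_n. If ab = ba, then a_m σᵐ(b_n) = b_n σⁿ(a_m), and consequently deg_y(a_m) + sᵐ·deg_y(b_n) = deg_y(b_n) + sⁿ·deg_y(a_m), so deg_y(b_n) is uniquely determined by m, n, s and deg_y(a_m). -/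
/-- The octonions, realized via the Cayley–Dickson doubling of the real quaternions. -/
def Octonion : Type := Quaternion ℝ × Quaternion ℝ

noncomputable instance : AddCommGroup Octonion :=
  inferInstanceAs (AddCommGroup (Quaternion ℝ × Quaternion ℝ))

noncomputable instance : Module ℝ Octonion :=
  inferInstanceAs (Module ℝ (Quaternion ℝ × Quaternion ℝ))

/-- Cayley–Dickson multiplication on pairs of quaternions. -/
noncomputable def Octonion.omul (a b : Quaternion ℝ × Quaternion ℝ) :
    Quaternion ℝ × Quaternion ℝ :=
  (a.1 * b.1 - star b.2 * a.2, b.2 * a.1 + a.2 * star b.1)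

noncomputable instance : One Octonion := ⟨((1 : Quaternion ℝ), (0 : Quaternion ℝ))⟩

theorem Octonion.omul_add (a b c : Quaternion ℝ × Quaternion ℝ) :
    Octonion.omul a (b + c) = Octonion.omul a b + Octonion.omul a c := by
  unfold Octonion.omul
  refine Prod.ext ?_ ?_ <;>
    simp only [Prod.fst_add, Prod.snd_add, mul_add, add_mul, star_add] <;> abel

theorem Octonion.add_omul (a b c : Quaternion ℝ × Quaternion ℝ) :
    Octonion.omul (a + b) c = Octonion.omul a c + Octonion.omul b c := by
  unfold Octonion.omul
  refine Prod.ext ?_ ?_ <;>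
    simp only [Prod.fst_add, Prod.snd_add, mul_add, add_mul, star_add] <;> abel

theorem Octonion.zero_omul (a : Quaternion ℝ × Quaternion ℝ) :
    Octonion.omul 0 a = 0 := by
  unfold Octonion.omul; refine Prod.ext ?_ ?_ <;> simp

theorem Octonion.omul_zero (a : Quaternion ℝ × Quaternion ℝ) :
    Octonion.omul a 0 = 0 := by
  unfold Octonion.omul; refine Prod.ext ?_ ?_ <;> simp

noncomputable instance : NonUnitalNonAssocRing Octonion :=
  { (inferInstanceAs (AddCommGroup Octonion) : AddCommGroup Octonion) with
    mul := Octonion.omul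
    left_distrib := fun a b c => Octonion.omul_add a b c
    right_distrib := fun a b c => Octonion.add_omul a b c
    zero_mul := fun a => Octonion.zero_omul a
    mul_zero := fun a => Octonion.omul_zero a }

/-- `R = 𝕆[y]`, the polynomial ring over the octonions, as finitely supported
sequences of octonion coefficients. -/
noncomputable abbrev OctPoly : Type := ℕ →₀ Octonion

/-- The convolution product on `𝕆[y]`. -/
noncomputable instance : Mul OctPoly :=
  ⟨fun p q => p.sum fun i a => q.sum fun j b => Finsupp.single (i + j) (a * b)⟩

theorem OctPoly.mul_zero (a : OctPoly) : a * (0 : OctPoly) = 0 := by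
  show (Finsupp.sum a fun i c => Finsupp.sum 0 fun j b => Finsupp.single (i + j) (c * b)) = 0
  simp

/-- The variable `y` of `𝕆[y]`. -/
noncomputable def Yv : OctPoly := Finsupp.single 1 (1 : Octonion)

/-- The constant polynomial `1` of `𝕆[y]`. -/
noncomputable def oneR : OctPoly := Finsupp.single 0 (1 : Octonion)

/-- The `y`-degree of a polynomial in `𝕆[y]` (with junk value `0` at `0`). -/
def degy (r : OctPoly) : ℕ := WithBot.unbotD 0 (r.support.max)

/-- The underlying additive group of the Ore extension `S = R[x; σ, δ]`:
finitely supported sequences of coefficients in `R = 𝕆[y]`. -/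
noncomputable abbrev OrePoly : Type := ℕ →₀ OctPoly

/-- Left multiplication by `x` in `R[x; σ, δ]`, determined by
`x·(r xʲ) = σ(r) x^(j+1) + δ(r) xʲ`. -/
noncomputable def xmul (σ δ : OctPoly →+ OctPoly) : OrePoly →+ OrePoly :=
  Finsupp.liftAddHom fun j =>
    (Finsupp.singleAddHom (j + 1)).comp σ + (Finsupp.singleAddHom j).comp δ

/-- The multiplication of the non-associative Ore extension `R[x; σ, δ]`:
`(Σᵢ aᵢ xⁱ)·q = Σᵢ aᵢ·(xⁱ·q)`, where `xⁱ` acts via iterated `xmul` and `aᵢ`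
multiplies every coefficient from the left. -/
noncomputable def oreMul (σ δ : OctPoly →+ OctPoly) (p q : OrePoly) : OrePoly :=
  p.sum fun i a => Finsupp.mapRange (a * ·) (OctPoly.mul_zero a) ((xmul σ δ)^[i] q)

/-- The constant `1 = 1·x⁰` of the Ore extension. -/
noncomputable def oneS : OrePoly := Finsupp.single 0 oneR

/-- The `x`-degree of an element of the Ore extension, valued in `ℤ ∪ {-∞}`. -/
def xdeg (p : OrePoly) : WithBot ℤ := (p.support.max).map (Nat.cast : ℕ → ℤ)

/-- `σ` is a unital `ℝ`-algebra endomorphism of `𝕆[y]`. -/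
def IsAlgEndo (σ : OctPoly →+ OctPoly) : Prop :=
  (∀ p q : OctPoly, σ (p * q) = σ p * σ q) ∧ σ oneR = oneR ∧
    (∀ (r : ℝ) (p : OctPoly), σ (r • p) = r • σ p)

/-- `δ` is a `σ`-derivation of `𝕆[y]`. -/
def IsSigmaDerivation (σ δ : OctPoly →+ OctPoly) : Prop :=
  (∀ p q : OctPoly, δ (p * q) = σ p * δ q + δ p * q) ∧
    (∀ (r : ℝ) (p : OctPoly), δ (r • p) = r • δ p)

/-- An element of `𝕆` is real if it is a real multiple of `1`. -/
def Octonion.IsReal (c : Octonion) : Prop := ∃ r : ℝ, c = r • (1 : Octonion)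

/-- Membership in the nucleus of the Ore extension `R[x; σ, δ]`. -/
def OreNucleus (σ δ : OctPoly →+ OctPoly) (a : OrePoly) : Prop :=
  (∀ b c : OrePoly, oreMul σ δ a (oreMul σ δ b c) = oreMul σ δ (oreMul σ δ a b) c) ∧
  (∀ b c : OrePoly, oreMul σ δ (oreMul σ δ b a) c = oreMul σ δ b (oreMul σ δ a c)) ∧
  (∀ b c : OrePoly, oreMul σ δ (oreMul σ δ b c) a = oreMul σ δ b (oreMul σ δ c a))

/-!
Comparing the coefficients of `x^(m+n)` in `a·b` and `b·a`: in `a_i·(xⁱ·b)` the power `xⁱ`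
raises the `x`-degree of `b` by at most `i`, and the only contribution to `x^(m+n)` is
`a_m·σᵐ(b_n)`, because `δ` never raises the `x`-degree. This gives the coefficient identity.
For the degrees, `𝕆` has no zero divisors (its norm is multiplicative), so `deg_y` is additive
on `𝕆[y]`; and `σ` multiplies `deg_y` by `s`, since it sends `y` to a polynomial of degree `s`
and nonzero constants, which are invertible, to nonzero constants.
-/

theorem Finsupp.support_max_eq_iff {M : Type*} [Zero M] {f : ℕ →₀ M} {d : ℕ} :
    f.support.max = d ↔ f d ≠ 0 ∧ ∀ k, d < k → f k = 0 := by
  constructor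
  · intro h
    refine ⟨mem_support_iff.mp (Finset.mem_of_max h), fun k hk => ?_⟩
    exact notMem_support_iff.mp (Finset.notMem_of_max_lt hk h)
  · rintro ⟨hd, hvanish⟩
    refine le_antisymm (Finset.max_le fun k hk => ?_) (Finset.le_max (mem_support_iff.mpr hd))
    by_contra hlt
    exact mem_support_iff.mp hk (hvanish k (WithBot.coe_lt_coe.mp (not_le.mp hlt)))

theorem Finsupp.le_of_mem_support {α M : Type*} [LinearOrder α] [Zero M] {f : α →₀ M} {d : α}
    (hf : ∀ k, d < k → f k = 0) {i : α} (hi : i ∈ f.support) : i ≤ d :=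
  not_lt.mp fun h => mem_support_iff.mp hi (hf i h)

namespace Octonion

noncomputable instance : MulZeroOneClass Octonion :=
  { (inferInstance : NonUnitalNonAssocRing Octonion) with
    one_mul := fun a => by
      change Octonion.omul (1, 0) a = a
      refine Prod.ext ?_ ?_ <;> simp [Octonion.omul]
    mul_one := fun a => by
      change Octonion.omul a (1, 0) = a
      refine Prod.ext ?_ ?_ <;> simp [Octonion.omul] }

instance : NeZero (1 : Octonion) :=
  ⟨fun h => one_ne_zero (congrArg Prod.fst h : (1 : Quaternion ℝ) = 0)⟩

noncomputable def normSq (a : Octonion) : ℝ :=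
  Quaternion.normSq a.1 + Quaternion.normSq a.2

theorem normSq_mul (a b : Octonion) : normSq (a * b) = normSq a * normSq b := by
  change Quaternion.normSq (a.1 * b.1 - star b.2 * a.2) +
      Quaternion.normSq (b.2 * a.1 + a.2 * star b.1)
    = (Quaternion.normSq a.1 + Quaternion.normSq a.2) *
      (Quaternion.normSq b.1 + Quaternion.normSq b.2)
  -- the cross terms of the two squared norms cancel, since `re (x * y) = re (y * x)`
  have cross : ((a.1 * b.1) * (star a.2 * b.2)).re = ((b.2 * a.1) * (b.1 * star a.2)).re := by
    have re_mul_comm (x y : Quaternion ℝ) : (x * y).re = (y * x).re := by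
      simp only [Quaternion.re_mul]; ring
    rw [← mul_assoc, re_mul_comm, mul_assoc a.1 b.1, ← mul_assoc b.2 a.1]
  have h₁ : Quaternion.normSq (a.1 * b.1 - star b.2 * a.2)
      = Quaternion.normSq (a.1 * b.1) + Quaternion.normSq (star b.2 * a.2)
        - 2 * ((a.1 * b.1) * (star a.2 * b.2)).re := by
    rw [sub_eq_add_neg, Quaternion.normSq_add, Quaternion.normSq_neg]
    simp only [star_neg, mul_neg, Quaternion.re_neg, star_mul, star_star]
    ring
  have h₂ : Quaternion.normSq (b.2 * a.1 + a.2 * star b.1)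
      = Quaternion.normSq (b.2 * a.1) + Quaternion.normSq (a.2 * star b.1)
        + 2 * ((b.2 * a.1) * (b.1 * star a.2)).re := by
    rw [Quaternion.normSq_add]
    simp only [star_mul, star_star]
  rw [h₁, h₂, cross]
  simp only [map_mul, Quaternion.normSq_star]
  ring

theorem normSq_eq_zero {a : Octonion} : normSq a = 0 ↔ a = 0 := by
  have h₁ := Quaternion.normSq_nonneg (a := a.1)
  have h₂ := Quaternion.normSq_nonneg (a := a.2)
  constructor
  · intro h
    exact Prod.ext (Quaternion.normSq_eq_zero.mp (by unfold normSq at h; linarith))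
      (Quaternion.normSq_eq_zero.mp (by unfold normSq at h; linarith))
  · rintro rfl
    change Quaternion.normSq 0 + Quaternion.normSq 0 = 0
    simp

instance : NoZeroDivisors Octonion where
  eq_zero_or_eq_zero_of_mul_eq_zero {a b} h := by
    have := congrArg normSq h
    rwa [normSq_mul, normSq_eq_zero.mpr rfl, mul_eq_zero, normSq_eq_zero, normSq_eq_zero] at this

instance : SMulCommClass ℝ Octonion Octonion where
  smul_comm r a b := by
    change r • Octonion.omul a b = Octonion.omul a (r • b.1, r • b.2)
    refine Prod.ext ?_ ?_ <;> simp [Octonion.omul, smul_sub, smul_add]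

theorem exists_mul_eq_one {c : Octonion} (hc : c ≠ 0) : ∃ d : Octonion, c * d = 1 := by
  let conj : Octonion := (star c.1, -c.2)
  have hconj : c * conj = normSq c • (1 : Octonion) := by
    refine Prod.ext ?_ ?_
    · change c.1 * star c.1 - star (-c.2) * c.2 = normSq c • (1 : Quaternion ℝ)
      rw [Quaternion.self_mul_star, star_neg, neg_mul, Quaternion.star_mul_self, sub_neg_eq_add,
        Algebra.smul_def, mul_one, ← Quaternion.coe_add]
      rfl
    · change -c.2 * c.1 + c.2 * star (star c.1) = normSq c • (0 : Quaternion ℝ)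
      rw [star_star, smul_zero, neg_mul, neg_add_cancel]
  refine ⟨(normSq c)⁻¹ • conj, ?_⟩
  rw [mul_smul_comm, hconj, smul_smul, inv_mul_cancel₀ (normSq_eq_zero.not.mpr hc), one_smul]

end Octonion

namespace OctPoly

theorem mul_apply (p q : OctPoly) (k : ℕ) :
    (p * q) k = ∑ i ∈ p.support, ∑ j ∈ q.support, if i + j = k then p i * q j else 0 := by
  change (p.sum fun i a => q.sum fun j b => Finsupp.single (i + j) (a * b)) k = _
  simp only [Finsupp.sum, Finsupp.finsetSum_apply, Finsupp.single_apply]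

theorem zero_mul (p : OctPoly) : 0 * p = 0 :=
  Finsupp.sum_zero_index

theorem single_mul_single (i j : ℕ) (c e : Octonion) :
    (Finsupp.single i c : OctPoly) * Finsupp.single j e = Finsupp.single (i + j) (c * e) := by
  change Finsupp.sum _ _ = _
  rw [Finsupp.sum_single_index (by simp), Finsupp.sum_single_index (by simp)]

section Vanishing

variable {p q : OctPoly} {d e : ℕ}

theorem mul_apply_eq_zero_of_lt (hp : ∀ k, d < k → p k = 0) (hq : ∀ k, e < k → q k = 0)
    {k : ℕ} (hk : d + e < k) : (p * q) k = 0 := by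
  rw [mul_apply]
  refine Finset.sum_eq_zero fun i hi => Finset.sum_eq_zero fun j hj => if_neg ?_
  have := Finsupp.le_of_mem_support hp hi
  have := Finsupp.le_of_mem_support hq hj
  omega

theorem mul_apply_add (hp : ∀ k, d < k → p k = 0) (hq : ∀ k, e < k → q k = 0) :
    (p * q) (d + e) = p d * q e := by
  rw [mul_apply, Finset.sum_eq_single d, Finset.sum_eq_single e, if_pos rfl]
  · intro j _ hj
    exact if_neg (by omega)
  · intro he
    simp [Finsupp.notMem_support_iff.mp he]
  · intro i hi hid
    refine Finset.sum_eq_zero fun j hj => if_neg ?_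
    have := Finsupp.le_of_mem_support hp hi
    have := Finsupp.le_of_mem_support hq hj
    omega
  · intro hd
    refine Finset.sum_eq_zero fun j _ => ?_
    simp [Finsupp.notMem_support_iff.mp hd]

end Vanishing

theorem support_max_mul {p q : OctPoly} {d e : ℕ} (hp : p.support.max = d)
    (hq : q.support.max = e) : (p * q).support.max = ((d + e : ℕ) : WithBot ℕ) := by
  rw [Finsupp.support_max_eq_iff] at hp hq ⊢
  exact ⟨by rw [mul_apply_add hp.2 hq.2]; exact mul_ne_zero hp.1 hq.1,
    fun k hk => mul_apply_eq_zero_of_lt hp.2 hq.2 hk⟩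

theorem support_max_eq_degy {p : OctPoly} (hp : p ≠ 0) : p.support.max = degy p := by
  obtain ⟨d, hd⟩ := Finset.max_of_nonempty (Finsupp.support_nonempty_iff.mpr hp)
  rw [degy, hd]
  rfl

theorem support_max_oneR : oneR.support.max = (0 : ℕ) := by
  rw [oneR, Finsupp.support_single _ one_ne_zero, Finset.max_singleton]
  rfl

theorem support_max_eq_zero_of_mul_eq_oneR {p q : OctPoly} (h : p * q = oneR) :
    p.support.max = (0 : ℕ) := by
  have honeR : oneR ≠ 0 := Finsupp.single_ne_zero.mpr one_ne_zero
  have hp : p ≠ 0 := by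
    rintro rfl
    exact honeR (h.symm.trans (zero_mul q))
  have hq : q ≠ 0 := by
    rintro rfl
    exact honeR (h.symm.trans (OctPoly.mul_zero p))
  have hdeg := support_max_mul (support_max_eq_degy hp) (support_max_eq_degy hq)
  rw [h, support_max_oneR, Nat.cast_inj] at hdeg
  rw [support_max_eq_degy hp, Nat.cast_inj]
  omega

end OctPoly

namespace IsAlgEndo

variable {σ : OctPoly →+ OctPoly} {s : ℕ}

theorem support_max_map_C (hσ : IsAlgEndo σ) {c : Octonion} (hc : c ≠ 0) :
    (σ (Finsupp.single 0 c)).support.max = (0 : ℕ) := by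
  obtain ⟨c', hc'⟩ := Octonion.exists_mul_eq_one hc
  refine OctPoly.support_max_eq_zero_of_mul_eq_oneR (q := σ (Finsupp.single 0 c')) ?_
  rw [← hσ.1, OctPoly.single_mul_single, hc', ← hσ.2.1]
  rfl

theorem support_max_map_single_one (hσ : IsAlgEndo σ) (hs : (σ Yv).support.max = s) (j : ℕ) :
    (σ (Finsupp.single j 1)).support.max = ((s * j : ℕ) : WithBot ℕ) := by
  induction j with
  | zero =>
    rw [Nat.mul_zero]
    exact (congrArg (fun p : OctPoly => p.support.max) hσ.2.1).trans OctPoly.support_max_oneR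
  | succ j ih =>
    have hsucc : (Finsupp.single (j + 1) 1 : OctPoly) = Yv * Finsupp.single j 1 := by
      rw [Yv, OctPoly.single_mul_single, mul_one, add_comm]
    rw [hsucc, hσ.1, OctPoly.support_max_mul hs ih, mul_add_one, add_comm]

theorem support_max_map_single (hσ : IsAlgEndo σ) (hs : (σ Yv).support.max = s) (j : ℕ)
    {c : Octonion} (hc : c ≠ 0) :
    (σ (Finsupp.single j c)).support.max = ((s * j : ℕ) : WithBot ℕ) := by
  have hsplit : (Finsupp.single j c : OctPoly) = Finsupp.single 0 c * Finsupp.single j 1 := by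
    rw [OctPoly.single_mul_single, mul_one, zero_add]
  rw [hsplit, hσ.1, OctPoly.support_max_mul (support_max_map_C hσ hc)
    (support_max_map_single_one hσ hs j), zero_add]

theorem support_max_map (hσ : IsAlgEndo σ) (hs : (σ Yv).support.max = s) (hs0 : 0 < s)
    {p : OctPoly} {d : ℕ} (hp : p.support.max = d) :
    (σ p).support.max = ((s * d : ℕ) : WithBot ℕ) := by
  rw [Finsupp.support_max_eq_iff] at hp ⊢
  have hterm : ∀ j ∈ p.support, σ (Finsupp.single j (p j)) (s * j) ≠ 0 ∧
      ∀ k, s * j < k → σ (Finsupp.single j (p j)) k = 0 := fun j hj =>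
    Finsupp.support_max_eq_iff.mp
      (support_max_map_single hσ hs j (Finsupp.mem_support_iff.mp hj))
  have hsum : ∀ k, σ p k = ∑ j ∈ p.support, σ (Finsupp.single j (p j)) k := fun k => by
    conv_lhs => rw [← Finsupp.sum_single p]
    rw [map_finsuppSum, Finsupp.sum, Finset.sum_apply']
  have hd : d ∈ p.support := Finsupp.mem_support_iff.mpr hp.1
  constructor
  · rw [hsum, Finset.sum_eq_single_of_mem d hd]
    · exact (hterm d hd).1
    · intro j hj hjd
      refine (hterm j hj).2 _ (Nat.mul_lt_mul_left hs0 |>.mpr ?_)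
      exact lt_of_le_of_ne (Finsupp.le_of_mem_support hp.2 hj) hjd
  · intro k hk
    rw [hsum]
    refine Finset.sum_eq_zero fun j hj => (hterm j hj).2 k ?_
    exact lt_of_le_of_lt (Nat.mul_le_mul_left s (Finsupp.le_of_mem_support hp.2 hj)) hk

theorem support_max_iterate_map (hσ : IsAlgEndo σ) (hs : (σ Yv).support.max = s)
    (hs0 : 0 < s) (i : ℕ) {p : OctPoly} {d : ℕ} (hp : p.support.max = d) :
    ((⇑σ)^[i] p).support.max = ((s ^ i * d : ℕ) : WithBot ℕ) := by
  induction i with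
  | zero => simpa using hp
  | succ i ih =>
    rw [Function.iterate_succ_apply', support_max_map hσ hs hs0 ih, pow_succ', mul_assoc]

end IsAlgEndo

section OreExtension

variable {σ δ : OctPoly →+ OctPoly}

theorem xmul_single (j : ℕ) (c : OctPoly) :
    xmul σ δ (Finsupp.single j c) = Finsupp.single (j + 1) (σ c) + Finsupp.single j (δ c) := by
  rw [xmul, Finsupp.liftAddHom_apply_single]
  rfl

theorem xmul_apply_succ (p : OrePoly) (k : ℕ) :
    xmul σ δ p (k + 1) = σ (p k) + δ (p (k + 1)) := by
  induction p using Finsupp.induction_linear with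
  | zero => simp
  | add p q hp hq => simp only [map_add, Finsupp.add_apply, hp, hq]; abel
  | single j c =>
    rw [xmul_single]
    simp only [Finsupp.add_apply, Finsupp.single_apply, apply_ite σ, apply_ite δ, map_zero]
    by_cases h₁ : j = k <;> by_cases h₂ : j = k + 1 <;> simp [h₁, h₂]

theorem iterate_xmul_apply (i : ℕ) {p : OrePoly} {d : ℕ} (hp : ∀ k, d < k → p k = 0) :
    (xmul σ δ)^[i] p (d + i) = (⇑σ)^[i] (p d) ∧
      ∀ k, d + i < k → (xmul σ δ)^[i] p k = 0 := by
  induction i with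
  | zero => exact ⟨rfl, hp⟩
  | succ i ih =>
    obtain ⟨htop, hvanish⟩ := ih
    rw [Function.iterate_succ_apply', Function.iterate_succ_apply', ← add_assoc,
      xmul_apply_succ, htop, hvanish _ (Nat.lt_succ_self _), map_zero, add_zero]
    refine ⟨rfl, fun k hk => ?_⟩
    obtain ⟨k, rfl⟩ : ∃ k', k = k' + 1 := ⟨k - 1, by omega⟩
    rw [xmul_apply_succ, hvanish k (by omega),
      hvanish (k + 1) (by omega), map_zero, map_zero, add_zero]

theorem oreMul_apply_add {a b : OrePoly} {m n : ℕ}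
    (ha : ∀ k, m < k → a k = 0) (hb : ∀ k, n < k → b k = 0) :
    oreMul σ δ a b (m + n) = a m * (⇑σ)^[m] (b n) := by
  rw [oreMul, Finsupp.sum_apply, Finsupp.sum, Finset.sum_eq_single m]
  · rw [Finsupp.mapRange_apply, add_comm, (iterate_xmul_apply m hb).1]
  · intro i hi him
    have := Finsupp.le_of_mem_support ha hi
    rw [Finsupp.mapRange_apply, (iterate_xmul_apply i hb).2 (m + n) (by omega), OctPoly.mul_zero]
  · intro hm
    rw [Finsupp.mapRange_apply, Finsupp.notMem_support_iff.mp hm, OctPoly.zero_mul]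

end OreExtension

theorem leading_coeff_eq_of_commute_general (σ δ : OctPoly →+ OctPoly)
    (hσ : IsAlgEndo σ) (s : ℕ) (hs : (σ Yv).support.max = (s : WithBot ℕ)) (hs1 : 1 < s)
    (a b : OrePoly) (m n : ℕ)
    (hm : a.support.max = (m : WithBot ℕ))
    (hn : b.support.max = (n : WithBot ℕ))
    (hcomm : oreMul σ δ a b = oreMul σ δ b a) :
    a m * (⇑σ)^[m] (b n) = b n * (⇑σ)^[n] (a m) ∧
    degy (a m) + s ^ m * degy (b n) = degy (b n) + s ^ n * degy (a m) := by
  obtain ⟨ham, ha⟩ := Finsupp.support_max_eq_iff.mp hm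
  obtain ⟨hbn, hb⟩ := Finsupp.support_max_eq_iff.mp hn
  have htop : a m * (⇑σ)^[m] (b n) = b n * (⇑σ)^[n] (a m) := by
    rw [← oreMul_apply_add ha hb, ← oreMul_apply_add hb ha, hcomm, add_comm]
  refine ⟨htop, ?_⟩
  have hdeg (i : ℕ) {p q : OctPoly} (hp : p ≠ 0) (hq : q ≠ 0) :
      (p * (⇑σ)^[i] q).support.max = ((degy p + s ^ i * degy q : ℕ) : WithBot ℕ) :=
    OctPoly.support_max_mul (OctPoly.support_max_eq_degy hp)
      (hσ.support_max_iterate_map hs (by omega) i (OctPoly.support_max_eq_degy hq))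
  exact_mod_cast (hdeg m ham hbn).symm.trans (htop ▸ hdeg n hbn ham)

/-- Let `a, b` be elements of the Ore extension `S = 𝕆[y][x; σ, δ]` with
`deg_y (σ y) = s > 1`, where `a` has `x`-degree `m > 0` with leading coefficient
`a_m`, and `b ≠ 0` has `x`-degree `n` with leading coefficient `b_n`.  If
`a·b = b·a`, then `a_m σᵐ(b_n) = b_n σⁿ(a_m)`, and consequently
`deg_y a_m + sᵐ·deg_y b_n = deg_y b_n + sⁿ·deg_y a_m`, so `deg_y b_n` is uniquely
determined by `m`, `n`, `s` and `deg_y a_m`. -/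
theorem leading_coeff_eq_of_commute (σ δ : OctPoly →+ OctPoly)
    (hσ : IsAlgEndo σ) (s : ℕ) (hs : (σ Yv).support.max = (s : WithBot ℕ)) (hs1 : 1 < s)
    (hδ : IsSigmaDerivation σ δ)
    (a b : OrePoly) (m n : ℕ)
    (hm : a.support.max = (m : WithBot ℕ)) (hmpos : 0 < m)
    (hb : b ≠ 0) (hn : b.support.max = (n : WithBot ℕ))
    (hcomm : oreMul σ δ a b = oreMul σ δ b a) :
    a m * (⇑σ)^[m] (b n) = b n * (⇑σ)^[n] (a m) ∧
    degy (a m) + s ^ m * degy (b n) = degy (b n) + s ^ n * degy (a m) :=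
  leading_coeff_eq_of_commute_general σ δ hσ s hs hs1 a b m n hm hn hcomm
end
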